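/- arXiv:2003.05587 — 7 statements merged into one kernel-verified Lean document; each statement's English description precedes it below -/
import Mathlib

section
/- Fix an index i ∈ {1,…,N} and t ∈ [0,1]^N, and for τ ∈ [0,1] let t[i:=τ] denote t with its i-th coordinate replaced by τ. Then the map τ ↦ H(t[i:=τ]) is affine with slope H_i: for all τ₁, τ₂ ∈ [0,1], H(t[i:=τ₁]) − H(t[i:=τ₂]) = (τ₁ − τ₂) · H_i, where H_i = ∫_{V_i} R(x) · (∏_{k∈B_i} (1 − t_k p_k(x))) · p_i(x) dx − β·γ_i does not depend on the i-th coordinate of t. -/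
open MeasureTheory
open scoped Classical

/-- The objective `H` is affine in the `i`-th coordinate `t_i`, with slope `H_i`
which does not depend on `t_i`. -/
theorem objective_affine_in_ti
    (N : ℕ) (hN : 1 ≤ N)
    (Ω : Set (ℝ × ℝ)) (hΩ : MeasurableSet Ω)
    (R : ℝ × ℝ → ℝ) (hRmeas : Measurable R) (hR0 : ∀ x, 0 ≤ R x)
    (hRint : IntegrableOn R Ω)
    (V : Fin N → Set (ℝ × ℝ)) (hVmeas : ∀ i, MeasurableSet (V i))
    (hVΩ : ∀ i, V i ⊆ Ω)
    (p : Fin N → (ℝ × ℝ) → ℝ) (hpmeas : ∀ i, Measurable (p i))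
    (hp0 : ∀ i x, 0 ≤ p i x) (hp1 : ∀ i x, p i x ≤ 1)
    (hpV : ∀ i x, x ∉ V i → p i x = 0)
    (γ : Fin N → ℝ) (hγ : ∀ i, 0 ≤ γ i) (β : ℝ) (hβ : 0 ≤ β)
    (H : (Fin N → ℝ) → ℝ)
    (hH : ∀ t : Fin N → ℝ,
      H t = (∫ x in Ω, R x * (1 - ∏ l, (1 - t l * p l x))) - β * ∑ l, γ l * t l)
    (t : Fin N → ℝ) (ht : ∀ l, t l ∈ Set.Icc (0 : ℝ) 1)
    (i : Fin N)
    (τ₁ τ₂ : ℝ) (hτ₁ : τ₁ ∈ Set.Icc (0 : ℝ) 1) (hτ₂ : τ₂ ∈ Set.Icc (0 : ℝ) 1) :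
    H (Function.update t i τ₁) - H (Function.update t i τ₂)
      = (τ₁ - τ₂) * ((∫ x in V i,
            R x * (∏ k ∈ Finset.univ.filter
              (fun l : Fin N => l ≠ i ∧ (V i ∩ V l).Nonempty),
                (1 - t k * p k x)) * p i x)
          - β * γ i) := by
  -- bounds for updated vectors
  have hupd : ∀ τ ∈ Set.Icc (0:ℝ) 1, ∀ l, Function.update t i τ l ∈ Set.Icc (0:ℝ) 1 := by
    intro τ hτ l
    by_cases h : l = i
    · subst h; simpa using hτ
    · simpa [Function.update_of_ne h] using ht l
  -- integrability of the main integrand for any coefficient vector in [0,1]^N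
  have key : ∀ (u : Fin N → ℝ), (∀ l, u l ∈ Set.Icc (0:ℝ) 1) →
      Integrable (fun x => R x * (1 - ∏ l, (1 - u l * p l x))) (volume.restrict Ω) := by
    intro u hu
    apply Integrable.mono' hRint
    · exact (hRmeas.mul (measurable_const.sub
        (Finset.measurable_prod _ (fun l _ =>
          measurable_const.sub ((hpmeas l).const_mul (u l)))))).aestronglyMeasurable
    · refine Filter.Eventually.of_forall (fun x => ?_)
      have h01 : ∀ l, (0:ℝ) ≤ 1 - u l * p l x ∧ 1 - u l * p l x ≤ 1 := by
        intro l
        constructor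
        · have : u l * p l x ≤ 1 :=
            mul_le_one₀ (hu l).2 (hp0 l x) (hp1 l x)
          linarith
        · have : 0 ≤ u l * p l x := mul_nonneg (hu l).1 (hp0 l x)
          linarith
      have hP0 : (0:ℝ) ≤ ∏ l, (1 - u l * p l x) :=
        Finset.prod_nonneg (fun l _ => (h01 l).1)
      have hP1 : (∏ l, (1 - u l * p l x)) ≤ 1 :=
        Finset.prod_le_one (fun l _ => (h01 l).1) (fun l _ => (h01 l).2)
      have : |1 - ∏ l, (1 - u l * p l x)| ≤ 1 := by
        rw [abs_of_nonneg (by linarith)]; linarith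
      calc ‖R x * (1 - ∏ l, (1 - u l * p l x))‖
          = R x * |1 - ∏ l, (1 - u l * p l x)| := by
            rw [norm_mul, Real.norm_eq_abs, Real.norm_eq_abs, abs_of_nonneg (hR0 x)]
        _ ≤ R x * 1 := mul_le_mul_of_nonneg_left this (hR0 x)
        _ = R x := mul_one _
  have hint₁ := key _ (hupd τ₁ hτ₁)
  have hint₂ := key _ (hupd τ₂ hτ₂)
  -- product splitting
  have hprod : ∀ (τ : ℝ) (x : ℝ × ℝ),
      ∏ l, (1 - Function.update t i τ l * p l x)
        = (1 - τ * p i x) * ∏ l ∈ Finset.univ.erase i, (1 - t l * p l x) := by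
    intro τ x
    rw [← Finset.mul_prod_erase _ _ (Finset.mem_univ i)]
    congr 1
    · simp
    · exact Finset.prod_congr rfl (fun l hl => by
        rw [Function.update_of_ne (Finset.ne_of_mem_erase hl)])
  -- sum splitting
  have hsum : ∀ τ : ℝ, ∑ l, γ l * Function.update t i τ l
      = γ i * τ + ∑ l ∈ Finset.univ.erase i, γ l * t l := by
    intro τ
    rw [← Finset.add_sum_erase _ _ (Finset.mem_univ i)]
    congr 1
    · simp
    · exact Finset.sum_congr rfl (fun l hl => by
        rw [Function.update_of_ne (Finset.ne_of_mem_erase hl)])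
  set P : (ℝ × ℝ) → ℝ := fun x => ∏ l ∈ Finset.univ.erase i, (1 - t l * p l x) with hP
  -- main computation
  rw [hH, hH, hsum, hsum]
  have hdiff : (∫ x in Ω, R x * (1 - ∏ l, (1 - Function.update t i τ₁ l * p l x)))
      - (∫ x in Ω, R x * (1 - ∏ l, (1 - Function.update t i τ₂ l * p l x)))
      = (τ₁ - τ₂) * ∫ x in Ω, R x * P x * p i x := by
    rw [← integral_sub hint₁ hint₂, ← smul_eq_mul, ← integral_smul]
    refine integral_congr_ae (Filter.Eventually.of_forall (fun x => ?_))
    simp only [hprod, smul_eq_mul, hP]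
    ring
  -- restrict the integral to V i
  have hVint : (∫ x in Ω, R x * P x * p i x)
      = ∫ x in V i, R x * P x * p i x := by
    have h1 : (∫ x in Ω, R x * P x * p i x)
        = ∫ x in Ω, (V i).indicator (fun x => R x * P x * p i x) x := by
      refine setIntegral_congr_fun hΩ (fun x hx => ?_)
      by_cases h : x ∈ V i
      · rw [Set.indicator_of_mem h]
      · rw [Set.indicator_of_notMem h, hpV i x h, mul_zero]
    rw [h1, setIntegral_indicator (hVmeas i),
      Set.inter_eq_self_of_subset_right (hVΩ i)]
  -- replace the erase-product by the filter-product on V i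
  have hfil : (∫ x in V i, R x * P x * p i x)
      = ∫ x in V i, R x * (∏ k ∈ Finset.univ.filter
          (fun l : Fin N => l ≠ i ∧ (V i ∩ V l).Nonempty), (1 - t k * p k x)) * p i x := by
    refine setIntegral_congr_fun (hVmeas i) (fun x hx => ?_)
    have : P x = ∏ k ∈ Finset.univ.filter
        (fun l : Fin N => l ≠ i ∧ (V i ∩ V l).Nonempty), (1 - t k * p k x) := by
      refine (Finset.prod_subset ?_ ?_).symm
      · intro l hl
        simp only [Finset.mem_filter, Finset.mem_univ, true_and] at hl
        exact Finset.mem_erase.2 ⟨hl.1, Finset.mem_univ l⟩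
      · intro l hl hnl
        simp only [Finset.mem_erase, Finset.mem_univ, and_true] at hl
        simp only [Finset.mem_filter, Finset.mem_univ, true_and, not_and] at hnl
        have hempty : ¬ (V i ∩ V l).Nonempty := hnl hl
        have : x ∉ V l := fun hxl => hempty ⟨x, hx, hxl⟩
        rw [hpV l x this, mul_zero, sub_zero]
    rw [this]
  rw [hVint, hfil] at hdiff
  linear_combination hdiff
end

section
/- (Theorem 1, part 1.) Let t* ∈ [0,1]^N maximize H over [0,1]^N, and fix i ∈ {1,…,N}. If H_i(t*) < 0, where H_i(t*) = ∫_{V_i} R(x) · (∏_{k∈B_i} (1 − t*_k p_k(x))) · p_i(x) dx − β·γ_i, then t*_i = 0. -/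
open MeasureTheory
open scoped Classical

/-- Theorem 1, part 1: at a maximizer `t*` of `H` over `[0,1]^N`, if `H_i(t*) < 0`
then `t*_i = 0`. -/
theorem maximizer_ti_eq_zero
    (N : ℕ) (hN : 1 ≤ N)
    (Ω : Set (ℝ × ℝ)) (hΩ : MeasurableSet Ω)
    (R : ℝ × ℝ → ℝ) (hRmeas : Measurable R) (hR0 : ∀ x, 0 ≤ R x)
    (hRint : IntegrableOn R Ω)
    (V : Fin N → Set (ℝ × ℝ)) (hVmeas : ∀ i, MeasurableSet (V i))
    (hVΩ : ∀ i, V i ⊆ Ω)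
    (p : Fin N → (ℝ × ℝ) → ℝ) (hpmeas : ∀ i, Measurable (p i))
    (hp0 : ∀ i x, 0 ≤ p i x) (hp1 : ∀ i x, p i x ≤ 1)
    (hpV : ∀ i x, x ∉ V i → p i x = 0)
    (γ : Fin N → ℝ) (hγ : ∀ i, 0 ≤ γ i) (β : ℝ) (hβ : 0 ≤ β)
    (H : (Fin N → ℝ) → ℝ)
    (hH : ∀ t : Fin N → ℝ,
      H t = (∫ x in Ω, R x * (1 - ∏ l, (1 - t l * p l x))) - β * ∑ l, γ l * t l)
    (tstar : Fin N → ℝ) (htstar : ∀ l, tstar l ∈ Set.Icc (0 : ℝ) 1)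
    (hmax : ∀ t : Fin N → ℝ, (∀ l, t l ∈ Set.Icc (0 : ℝ) 1) → H t ≤ H tstar)
    (i : Fin N)
    (hHi : (∫ x in V i,
        R x * (∏ k ∈ Finset.univ.filter
          (fun l : Fin N => l ≠ i ∧ (V i ∩ V l).Nonempty),
            (1 - tstar k * p k x)) * p i x)
      - β * γ i < 0) :
    tstar i = 0 := by

  classical
  set B := Finset.univ.filter (fun l : Fin N => l ≠ i ∧ (V i ∩ V l).Nonempty) with hBdef
  -- basic bounds on factors
  have hfac : ∀ (t : Fin N → ℝ), (∀ l, t l ∈ Set.Icc (0:ℝ) 1) →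
      ∀ l x, 0 ≤ 1 - t l * p l x ∧ 1 - t l * p l x ≤ 1 := by
    intro t ht l x
    obtain ⟨h0, h1⟩ := ht l
    constructor <;> nlinarith [hp0 l x, hp1 l x]
  have hprodmem : ∀ (t : Fin N → ℝ), (∀ l, t l ∈ Set.Icc (0:ℝ) 1) →
      ∀ (s : Finset (Fin N)) x,
        0 ≤ (∏ l ∈ s, (1 - t l * p l x)) ∧ (∏ l ∈ s, (1 - t l * p l x)) ≤ 1 := by
    intro t ht s x
    constructor
    · exact Finset.prod_nonneg (fun l _ => (hfac t ht l x).1)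
    · exact Finset.prod_le_one (fun l _ => (hfac t ht l x).1) (fun l _ => (hfac t ht l x).2)
  -- integrability of the main integrand
  have hmeasF : ∀ (t : Fin N → ℝ),
      Measurable fun x => R x * (1 - ∏ l, (1 - t l * p l x)) := by
    intro t
    exact hRmeas.mul (measurable_const.sub
      (Finset.measurable_prod _ (fun l _ => measurable_const.sub ((hpmeas l).const_mul (t l)))))
  have hintF : ∀ (t : Fin N → ℝ), (∀ l, t l ∈ Set.Icc (0:ℝ) 1) →
      IntegrableOn (fun x => R x * (1 - ∏ l, (1 - t l * p l x))) Ω := by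
    intro t ht
    apply Integrable.mono hRint ((hmeasF t).aestronglyMeasurable)
    filter_upwards with x
    rw [Real.norm_eq_abs, Real.norm_eq_abs, abs_mul]
    have h1 := hprodmem t ht Finset.univ x
    have h2 : |1 - ∏ l, (1 - t l * p l x)| ≤ 1 := by
      rw [abs_le]; constructor <;> linarith [h1.1, h1.2]
    exact mul_le_of_le_one_right (abs_nonneg _) h2
  -- the comparison point: tstar with i-th coordinate set to 0
  set t0 := Function.update tstar i 0 with ht0def
  have ht0 : ∀ l, t0 l ∈ Set.Icc (0:ℝ) 1 := by
    intro l
    by_cases h : l = i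
    · subst h; simp [ht0def]
    · simpa [ht0def, Function.update_of_ne h] using htstar l
  -- Q : the product over l ≠ i at tstar
  set Q : (ℝ × ℝ) → ℝ := fun x => ∏ l ∈ Finset.univ.erase i, (1 - tstar l * p l x) with hQdef
  have hP : ∀ x, (∏ l, (1 - tstar l * p l x)) = (1 - tstar i * p i x) * Q x := by
    intro x
    exact (Finset.mul_prod_erase Finset.univ _ (Finset.mem_univ i)).symm
  have hP0 : ∀ x, (∏ l, (1 - t0 l * p l x)) = Q x := by
    intro x
    rw [← Finset.mul_prod_erase Finset.univ _ (Finset.mem_univ i)]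
    have : t0 i = 0 := by simp [ht0def]
    rw [this]
    simp only [zero_mul, sub_zero, one_mul]
    apply Finset.prod_congr rfl
    intro l hl
    have : l ≠ i := Finset.ne_of_mem_erase hl
    rw [ht0def, Function.update_of_ne this]
  -- g : the marginal integrand over Ω
  set g : (ℝ × ℝ) → ℝ := fun x => R x * Q x * p i x with hgdef
  have hQmem : ∀ x, 0 ≤ Q x ∧ Q x ≤ 1 := fun x => hprodmem tstar htstar _ x
  have hgmeas : Measurable g := by
    exact (hRmeas.mul (Finset.measurable_prod _
      (fun l _ => measurable_const.sub ((hpmeas l).const_mul (tstar l))))).mul (hpmeas i)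
  have hgint : IntegrableOn g Ω := by
    apply Integrable.mono hRint hgmeas.aestronglyMeasurable
    filter_upwards with x
    rw [Real.norm_eq_abs, Real.norm_eq_abs, hgdef]
    have h1 := hQmem x
    have h2 : |Q x * p i x| ≤ 1 := by
      rw [abs_mul, abs_of_nonneg h1.1, abs_of_nonneg (hp0 i x)]
      exact mul_le_one₀ h1.2 (hp0 i x) (hp1 i x)
    calc |R x * Q x * p i x| = |R x| * |Q x * p i x| := by rw [mul_assoc, abs_mul]
      _ ≤ |R x| := mul_le_of_le_one_right (abs_nonneg _) h2
  -- key integral identity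
  have key : (∫ x in Ω, R x * (1 - ∏ l, (1 - tstar l * p l x)))
      = (∫ x in Ω, R x * (1 - ∏ l, (1 - t0 l * p l x))) + tstar i * ∫ x in Ω, g x := by
    have hpt : ∀ x, R x * (1 - ∏ l, (1 - tstar l * p l x))
        = R x * (1 - ∏ l, (1 - t0 l * p l x)) + tstar i * g x := by
      intro x
      rw [hP x, hP0 x, hgdef]
      ring
    calc (∫ x in Ω, R x * (1 - ∏ l, (1 - tstar l * p l x)))
        = ∫ x in Ω, (R x * (1 - ∏ l, (1 - t0 l * p l x)) + tstar i * g x) := by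
          exact integral_congr_ae (Filter.Eventually.of_forall hpt)
      _ = (∫ x in Ω, R x * (1 - ∏ l, (1 - t0 l * p l x))) + ∫ x in Ω, tstar i * g x := by
          exact integral_add (hintF t0 ht0) (hgint.const_mul (tstar i))
      _ = (∫ x in Ω, R x * (1 - ∏ l, (1 - t0 l * p l x))) + tstar i * ∫ x in Ω, g x := by
          rw [integral_const_mul]
  -- sum identity
  have hsum : (∑ l, γ l * tstar l) = (∑ l, γ l * t0 l) + γ i * tstar i := by
    rw [← Finset.add_sum_erase Finset.univ _ (Finset.mem_univ i),
        ← Finset.add_sum_erase Finset.univ (fun l => γ l * t0 l) (Finset.mem_univ i)]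
    have h1 : t0 i = 0 := by simp [ht0def]
    have h2 : ∀ l ∈ Finset.univ.erase i, γ l * t0 l = γ l * tstar l := by
      intro l hl
      rw [ht0def, Function.update_of_ne (Finset.ne_of_mem_erase hl)]
    rw [Finset.sum_congr rfl h2, h1]
    ring
  -- H difference
  have hHdiff : H tstar - H t0 = tstar i * ((∫ x in Ω, g x) - β * γ i) := by
    rw [hH tstar, hH t0, key, hsum]
    ring
  -- identify ∫_Ω g with the integral over V i appearing in hHi
  set f : (ℝ × ℝ) → ℝ := fun x => R x * (∏ k ∈ B, (1 - tstar k * p k x)) * p i x with hfdef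
  have hBsub : B ⊆ Finset.univ.erase i := by
    intro l hl
    rw [hBdef, Finset.mem_filter] at hl
    exact Finset.mem_erase.2 ⟨hl.2.1, Finset.mem_univ l⟩
  have hgf : ∀ x, g x = (V i).indicator f x := by
    intro x
    by_cases hx : x ∈ V i
    · rw [Set.indicator_of_mem hx]
      show R x * Q x * p i x = R x * (∏ k ∈ B, (1 - tstar k * p k x)) * p i x
      have hQx : Q x = ∏ k ∈ B, (1 - tstar k * p k x) := by
        rw [hQdef]
        refine (Finset.prod_subset hBsub ?_).symm
        intro l hl hlB
        have hli : l ≠ i := Finset.ne_of_mem_erase hl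
        rw [hBdef, Finset.mem_filter] at hlB
        have hemp : ¬(V i ∩ V l).Nonempty := by
          intro h
          exact hlB ⟨Finset.mem_univ l, hli, h⟩
        have hxl : x ∉ V l := fun h => hemp ⟨x, hx, h⟩
        rw [hpV l x hxl]
        ring
      rw [hQx]
    · rw [Set.indicator_of_notMem hx]
      show R x * Q x * p i x = 0
      rw [hpV i x hx]
      ring
  have hgI : (∫ x in Ω, g x) = ∫ x in V i, f x := by
    calc (∫ x in Ω, g x) = ∫ x in Ω, (V i).indicator f x :=
          integral_congr_ae (Filter.Eventually.of_forall (fun x => hgf x))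
      _ = ∫ x in Ω ∩ V i, f x := by rw [setIntegral_indicator (hVmeas i)]
      _ = ∫ x in V i, f x := by rw [Set.inter_eq_self_of_subset_right (hVΩ i)]
  -- conclusion
  have hle : 0 ≤ H tstar - H t0 := by
    have := hmax t0 ht0
    linarith
  rw [hHdiff, hgI] at hle
  have hneg : (∫ x in V i, f x) - β * γ i < 0 := hHi
  by_contra hne
  have hpos : 0 < tstar i := lt_of_le_of_ne (htstar i).1 (Ne.symm hne)
  nlinarith
end

section
/- (Theorem 1, part 2.) Let t* ∈ [0,1]^N maximize H over [0,1]^N, and fix i ∈ {1,…,N}. If H_i(t*) > 0, where H_i(t*) = ∫_{V_i} R(x) · (∏_{k∈B_i} (1 − t*_k p_k(x))) · p_i(x) dx − β·γ_i, then t*_i = 1. -/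
open MeasureTheory
open scoped Classical

/-- Theorem 1, part 2: at a maximizer `t*` of `H` over `[0,1]^N`, if `H_i(t*) > 0`
then `t*_i = 1`. -/
theorem maximizer_ti_eq_one
    (N : ℕ) (hN : 1 ≤ N)
    (Ω : Set (ℝ × ℝ)) (hΩ : MeasurableSet Ω)
    (R : ℝ × ℝ → ℝ) (hRmeas : Measurable R) (hR0 : ∀ x, 0 ≤ R x)
    (hRint : IntegrableOn R Ω)
    (V : Fin N → Set (ℝ × ℝ)) (hVmeas : ∀ i, MeasurableSet (V i))
    (hVΩ : ∀ i, V i ⊆ Ω)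
    (p : Fin N → (ℝ × ℝ) → ℝ) (hpmeas : ∀ i, Measurable (p i))
    (hp0 : ∀ i x, 0 ≤ p i x) (hp1 : ∀ i x, p i x ≤ 1)
    (hpV : ∀ i x, x ∉ V i → p i x = 0)
    (γ : Fin N → ℝ) (hγ : ∀ i, 0 ≤ γ i) (β : ℝ) (hβ : 0 ≤ β)
    (H : (Fin N → ℝ) → ℝ)
    (hH : ∀ t : Fin N → ℝ,
      H t = (∫ x in Ω, R x * (1 - ∏ l, (1 - t l * p l x))) - β * ∑ l, γ l * t l)
    (tstar : Fin N → ℝ) (htstar : ∀ l, tstar l ∈ Set.Icc (0 : ℝ) 1)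
    (hmax : ∀ t : Fin N → ℝ, (∀ l, t l ∈ Set.Icc (0 : ℝ) 1) → H t ≤ H tstar)
    (i : Fin N)
    (hHi : (∫ x in V i,
        R x * (∏ k ∈ Finset.univ.filter
          (fun l : Fin N => l ≠ i ∧ (V i ∩ V l).Nonempty),
            (1 - tstar k * p k x)) * p i x)
      - β * γ i > 0) :
    tstar i = 1 := by
  classical
  set t1 : Fin N → ℝ := Function.update tstar i 1 with ht1def
  have ht1 : ∀ l, t1 l ∈ Set.Icc (0:ℝ) 1 := by
    intro l
    by_cases h : l = i
    · subst h; simp [ht1def]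
    · simpa [ht1def, Function.update_of_ne h] using htstar l
  -- factor bounds
  have hfac : ∀ (t : Fin N → ℝ), (∀ l, t l ∈ Set.Icc (0:ℝ) 1) →
      ∀ (s : Finset (Fin N)) x, (0:ℝ) ≤ ∏ l ∈ s, (1 - t l * p l x) ∧
        ∏ l ∈ s, (1 - t l * p l x) ≤ 1 := by
    intro t ht s x
    constructor
    · exact Finset.prod_nonneg (fun l _ => by
        have h1 := (ht l).1; have h2 := (ht l).2
        nlinarith [hp0 l x, hp1 l x])
    · exact Finset.prod_le_one
        (fun l _ => by have h1 := (ht l).1; have h2 := (ht l).2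
                       nlinarith [hp0 l x, hp1 l x])
        (fun l _ => by have h1 := (ht l).1; have h2 := (ht l).2
                       nlinarith [hp0 l x, hp1 l x])
  -- integrability of the main integrand
  have hint : ∀ (t : Fin N → ℝ), (∀ l, t l ∈ Set.Icc (0:ℝ) 1) →
      IntegrableOn (fun x => R x * (1 - ∏ l, (1 - t l * p l x))) Ω := by
    intro t ht
    apply Integrable.mono' hRint
    · exact ((hRmeas.mul (measurable_const.sub
        (Finset.measurable_prod Finset.univ (fun l _ =>
          measurable_const.sub (measurable_const.mul (hpmeas l)))))).aestronglyMeasurable).restrict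
    · filter_upwards with x
      have h := hfac t ht Finset.univ x
      calc ‖R x * (1 - ∏ l, (1 - t l * p l x))‖
          = |R x| * |1 - ∏ l, (1 - t l * p l x)| := by rw [Real.norm_eq_abs, abs_mul]
        _ ≤ |R x| * 1 := by
            apply mul_le_mul_of_nonneg_left _ (abs_nonneg _)
            rw [abs_le]; constructor <;> nlinarith [h.1, h.2]
        _ = R x := by rw [mul_one, abs_of_nonneg (hR0 x)]
  -- integrability of g
  set g : (ℝ × ℝ) → ℝ := fun x => R x * (p i x * ∏ l ∈ Finset.univ.erase i, (1 - tstar l * p l x)) with hgdef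
  have hgint : IntegrableOn g Ω := by
    apply Integrable.mono' hRint
    · exact ((hRmeas.mul ((hpmeas i).mul
        (Finset.measurable_prod _ (fun l _ =>
          measurable_const.sub (measurable_const.mul (hpmeas l)))))).aestronglyMeasurable).restrict
    · filter_upwards with x
      have h := hfac tstar htstar (Finset.univ.erase i) x
      rw [hgdef]
      calc ‖R x * (p i x * ∏ l ∈ Finset.univ.erase i, (1 - tstar l * p l x))‖
          = |R x| * |p i x * ∏ l ∈ Finset.univ.erase i, (1 - tstar l * p l x)| := by
            rw [Real.norm_eq_abs, abs_mul]
        _ ≤ |R x| * 1 := by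
            apply mul_le_mul_of_nonneg_left _ (abs_nonneg _)
            rw [abs_le]; constructor <;> nlinarith [h.1, h.2, hp0 i x, hp1 i x]
        _ = R x := by rw [mul_one, abs_of_nonneg (hR0 x)]
  set c : ℝ := 1 - tstar i with hcdef
  -- pointwise identity
  have hpt : ∀ x, R x * (1 - ∏ l, (1 - t1 l * p l x))
      = R x * (1 - ∏ l, (1 - tstar l * p l x)) + c * g x := by
    intro x
    have hprod : ∀ (t : Fin N → ℝ), ∏ l, (1 - t l * p l x)
        = (1 - t i * p i x) * ∏ l ∈ Finset.univ.erase i, (1 - t l * p l x) := by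
      intro t
      rw [← Finset.prod_erase_mul Finset.univ _ (Finset.mem_univ i)]
      ring
    have he : ∀ l ∈ Finset.univ.erase i, (1 - t1 l * p l x) = (1 - tstar l * p l x) := by
      intro l hl
      have : l ≠ i := Finset.ne_of_mem_erase hl
      simp [ht1def, Function.update_of_ne this]
    rw [hprod t1, hprod tstar, Finset.prod_congr rfl he]
    simp only [ht1def, Function.update_self, hgdef, hcdef]
    ring
  -- integral identity
  have hIeq : (∫ x in Ω, R x * (1 - ∏ l, (1 - t1 l * p l x)))
      = (∫ x in Ω, R x * (1 - ∏ l, (1 - tstar l * p l x))) + c * ∫ x in Ω, g x := by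
    have : (∫ x in Ω, R x * (1 - ∏ l, (1 - t1 l * p l x)))
        = ∫ x in Ω, (R x * (1 - ∏ l, (1 - tstar l * p l x)) + c * g x) := by
      exact setIntegral_congr_fun hΩ (fun x _ => hpt x)
    rw [this, integral_add (hint tstar htstar) (hgint.const_mul c),
      MeasureTheory.integral_const_mul]
  -- sum identity
  have hsum : (∑ l, γ l * t1 l) = (∑ l, γ l * tstar l) + γ i * c := by
    have : ∀ l, γ l * t1 l = γ l * tstar l + (if l = i then γ i * c else 0) := by
      intro l
      by_cases h : l = i
      · subst h; simp [ht1def, hcdef]; ring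
      · simp [ht1def, Function.update_of_ne h, h]
    rw [Finset.sum_congr rfl (fun l _ => this l), Finset.sum_add_distrib]
    simp
  -- H difference
  have hHdiff : H t1 = H tstar + c * ((∫ x in Ω, g x) - β * γ i) := by
    rw [hH t1, hH tstar, hIeq, hsum]; ring
  -- reduce ∫_Ω g to the V i integral
  have hgV : (∫ x in Ω, g x) = ∫ x in V i,
      R x * (∏ k ∈ Finset.univ.filter
        (fun l : Fin N => l ≠ i ∧ (V i ∩ V l).Nonempty), (1 - tstar k * p k x)) * p i x := by
    have h1 : (∫ x in Ω, g x) = ∫ x in V i, g x := by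
      apply setIntegral_eq_of_subset_of_forall_diff_eq_zero hΩ (hVΩ i)
      intro x hx
      rw [hgdef]
      simp [hpV i x hx.2]
    rw [h1]
    apply setIntegral_congr_fun (hVmeas i)
    intro x hx
    have hprodeq : ∏ l ∈ Finset.univ.erase i, (1 - tstar l * p l x)
        = ∏ k ∈ Finset.univ.filter (fun l : Fin N => l ≠ i ∧ (V i ∩ V l).Nonempty),
            (1 - tstar k * p k x) := by
      symm
      apply Finset.prod_subset
      · intro l hl
        simp only [Finset.mem_filter, Finset.mem_univ, true_and] at hl
        exact Finset.mem_erase.2 ⟨hl.1, Finset.mem_univ l⟩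
      · intro l hl hnl
        simp only [Finset.mem_filter, Finset.mem_univ, true_and, not_and] at hnl
        have hli : l ≠ i := Finset.ne_of_mem_erase hl
        have hempty : ¬ (V i ∩ V l).Nonempty := hnl hli
        have hxl : x ∉ V l := fun h => hempty ⟨x, hx, h⟩
        rw [hpV l x hxl]; ring
    rw [hgdef]
    simp only
    rw [hprodeq]; ring
  -- conclude
  have hle : H t1 ≤ H tstar := hmax t1 ht1
  rw [hHdiff, hgV] at hle
  have hc0 : 0 ≤ c := by have := (htstar i).2; simp [hcdef]; linarith
  have : c ≤ 0 := by nlinarith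
  have := (htstar i).2
  simp [hcdef] at hc0 ⊢
  linarith [hc0, ‹c ≤ 0›]
end

section
/- (Theorem 1, part 3.) Let t* ∈ [0,1]^N and fix i ∈ {1,…,N}. If H_i(t*) = 0, where H_i(t*) = ∫_{V_i} R(x) · (∏_{k∈B_i} (1 − t*_k p_k(x))) · p_i(x) dx − β·γ_i, then the objective value is invariant to the i-th coordinate: for every τ ∈ [0,1], H(t*[i:=τ]) = H(t*), where t*[i:=τ] denotes t* with its i-th coordinate replaced by τ. -/
open MeasureTheory
open scoped Classical

/-- Theorem 1, part 3: if `H_i(t*) = 0`, then the objective value is invariant to the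
`i`-th coordinate of `t*`. -/
theorem objective_invariant_when_Hi_zero
    (N : ℕ) (hN : 1 ≤ N)
    (Ω : Set (ℝ × ℝ)) (hΩ : MeasurableSet Ω)
    (R : ℝ × ℝ → ℝ) (hRmeas : Measurable R) (hR0 : ∀ x, 0 ≤ R x)
    (hRint : IntegrableOn R Ω)
    (V : Fin N → Set (ℝ × ℝ)) (hVmeas : ∀ i, MeasurableSet (V i))
    (hVΩ : ∀ i, V i ⊆ Ω)
    (p : Fin N → (ℝ × ℝ) → ℝ) (hpmeas : ∀ i, Measurable (p i))
    (hp0 : ∀ i x, 0 ≤ p i x) (hp1 : ∀ i x, p i x ≤ 1)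
    (hpV : ∀ i x, x ∉ V i → p i x = 0)
    (γ : Fin N → ℝ) (hγ : ∀ i, 0 ≤ γ i) (β : ℝ) (hβ : 0 ≤ β)
    (H : (Fin N → ℝ) → ℝ)
    (hH : ∀ t : Fin N → ℝ,
      H t = (∫ x in Ω, R x * (1 - ∏ l, (1 - t l * p l x))) - β * ∑ l, γ l * t l)
    (tstar : Fin N → ℝ) (htstar : ∀ l, tstar l ∈ Set.Icc (0 : ℝ) 1)
    (i : Fin N)
    (hHi : (∫ x in V i,
        R x * (∏ k ∈ Finset.univ.filter
          (fun l : Fin N => l ≠ i ∧ (V i ∩ V l).Nonempty),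
            (1 - tstar k * p k x)) * p i x)
      - β * γ i = 0) :
    ∀ τ ∈ Set.Icc (0 : ℝ) 1, H (Function.update tstar i τ) = H tstar := by
  intro τ hτ
  set Q : (ℝ × ℝ) → ℝ := fun x => ∏ l ∈ Finset.univ.erase i, (1 - tstar l * p l x) with hQdef
  have hprod_update : ∀ x, ∏ l, (1 - Function.update tstar i τ l * p l x)
      = (1 - τ * p i x) * Q x := by
    intro x
    rw [← Finset.mul_prod_erase Finset.univ _ (Finset.mem_univ i)]
    simp only [Function.update_self]
    congr 1
    exact Finset.prod_congr rfl fun l hl => by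
      rw [Function.update_of_ne (Finset.ne_of_mem_erase hl)]
  have hprod_t : ∀ x, ∏ l, (1 - tstar l * p l x) = (1 - tstar i * p i x) * Q x := fun x =>
    (Finset.mul_prod_erase Finset.univ _ (Finset.mem_univ i)).symm
  -- integrability of the main integrand for any parameter in [0,1]^N
  have hint : ∀ s : Fin N → ℝ, (∀ l, s l ∈ Set.Icc (0 : ℝ) 1) →
      IntegrableOn (fun x => R x * (1 - ∏ l, (1 - s l * p l x))) Ω := by
    intro s hs
    have hmeas : Measurable fun x => R x * (1 - ∏ l, (1 - s l * p l x)) := by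
      apply hRmeas.mul
      apply measurable_const.sub
      exact Finset.measurable_prod _ fun l _ => measurable_const.sub ((hpmeas l).const_mul _)
    refine Integrable.mono hRint hmeas.aestronglyMeasurable ?_
    filter_upwards with x
    have h01 : ∀ l, 0 ≤ 1 - s l * p l x ∧ 1 - s l * p l x ≤ 1 := by
      intro l
      constructor
      · have := mul_le_one₀ (hs l).2 (hp0 l x) (hp1 l x)
        linarith
      · have := mul_nonneg (hs l).1 (hp0 l x)
        linarith
    have hprod0 : 0 ≤ ∏ l, (1 - s l * p l x) := Finset.prod_nonneg fun l _ => (h01 l).1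
    have hprod1 : ∏ l, (1 - s l * p l x) ≤ 1 :=
      Finset.prod_le_one (fun l _ => (h01 l).1) (fun l _ => (h01 l).2)
    rw [Real.norm_eq_abs, Real.norm_eq_abs, abs_mul]
    have : |1 - ∏ l, (1 - s l * p l x)| ≤ 1 := by
      rw [abs_le]; constructor <;> linarith
    calc |R x| * |1 - ∏ l, (1 - s l * p l x)| ≤ |R x| * 1 :=
          mul_le_mul_of_nonneg_left this (abs_nonneg _)
      _ = |R x| := mul_one _
  have hupd01 : ∀ l, Function.update tstar i τ l ∈ Set.Icc (0 : ℝ) 1 := by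
    intro l
    rcases eq_or_ne l i with rfl | h
    · simpa using hτ
    · rw [Function.update_of_ne h]; exact htstar l
  have hA := hint _ hupd01
  have hB := hint tstar htstar
  -- difference of the two integrals
  have hsplit : (∫ x in Ω, R x * (1 - ∏ l, (1 - Function.update tstar i τ l * p l x)))
      - (∫ x in Ω, R x * (1 - ∏ l, (1 - tstar l * p l x)))
      = (τ - tstar i) * ∫ x in Ω, R x * Q x * p i x := by
    rw [← integral_sub hA hB, ← integral_const_mul]
    refine integral_congr_ae (Filter.Eventually.of_forall fun x => ?_)
    dsimp only
    rw [hprod_update x, hprod_t x]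
    ring
  -- transfer the Ω-integral to V i with the filtered product
  have hΩVi : (∫ x in Ω, R x * Q x * p i x)
      = ∫ x in V i,
          R x * (∏ k ∈ Finset.univ.filter
            (fun l : Fin N => l ≠ i ∧ (V i ∩ V l).Nonempty),
              (1 - tstar k * p k x)) * p i x := by
    have hindic : (fun x => R x * Q x * p i x)
        = (V i).indicator (fun x => R x * Q x * p i x) := by
      funext x
      by_cases hx : x ∈ V i
      · rw [Set.indicator_of_mem hx]
      · rw [Set.indicator_of_notMem hx, hpV i x hx, mul_zero]
    rw [hindic, setIntegral_indicator (hVmeas i),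
      Set.inter_eq_self_of_subset_right (hVΩ i)]
    refine setIntegral_congr_fun (hVmeas i) fun x hx => ?_
    congr 1
    congr 1
    refine (Finset.prod_subset ?_ ?_).symm
    · intro l hl
      simp only [Finset.mem_filter, Finset.mem_univ, true_and] at hl
      exact Finset.mem_erase.mpr ⟨hl.1, Finset.mem_univ l⟩
    · intro l hl hnl
      simp only [Finset.mem_filter, Finset.mem_univ, true_and, not_and] at hnl
      have hli : l ≠ i := Finset.ne_of_mem_erase hl
      have hempty : ¬(V i ∩ V l).Nonempty := hnl hli
      have hxl : x ∉ V l := fun hxl => hempty ⟨x, hx, hxl⟩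
      rw [hpV l x hxl, mul_zero, sub_zero]
  -- the sums
  have hsum : ∀ s : Fin N → ℝ,
      ∑ l, γ l * s l = γ i * s i + ∑ l ∈ Finset.univ.erase i, γ l * s l := fun s =>
    (Finset.add_sum_erase _ _ (Finset.mem_univ i)).symm
  have hsumeq : ∑ l ∈ Finset.univ.erase i, γ l * Function.update tstar i τ l
      = ∑ l ∈ Finset.univ.erase i, γ l * tstar l :=
    Finset.sum_congr rfl fun l hl => by
      rw [Function.update_of_ne (Finset.ne_of_mem_erase hl)]
  have hInt : (∫ x in Ω, R x * Q x * p i x) = β * γ i := by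
    rw [hΩVi]; linarith
  rw [hH, hH, hsum (Function.update tstar i τ), hsum tstar, hsumeq,
    Function.update_self]
  have := hsplit
  rw [hInt] at this
  linarith
end

section
/- (Conventional greedy performance bound.) Let f be a monotone submodular set function on a finite ground set E with f(∅) = 0, let N ≥ 1, let s_1,…,s_N be a greedy sequence with S^G = {s_1,…,s_N}, and let S* be any subset of E with |S*| ≤ N. Then f(S^G) ≥ (1 − (1 − 1/N)^N) · f(S*). -/
open scoped Classical

/-- Conventional greedy performance bound for monotone submodular maximization under a
cardinality constraint: `f(S^G) ≥ (1 − (1 − 1/N)^N) · f(S*)`. -/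
theorem greedy_conventional_bound
    {E : Type*} [Fintype E] [DecidableEq E]
    (N : ℕ) (hN : 1 ≤ N) (hcard : N ≤ Fintype.card E)
    (f : Finset E → ℝ)
    (hf0 : f ∅ = 0)
    (hmono : ∀ A B : Finset E, A ⊆ B → f A ≤ f B)
    (hsub : ∀ A B : Finset E, A ⊆ B → ∀ e ∉ B,
      f (insert e B) - f B ≤ f (insert e A) - f A)
    (s : Fin N → E) (hs : Function.Injective s)
    (S : ℕ → Finset E)
    (hS : ∀ k : ℕ, S k = (Finset.univ.filter (fun j : Fin N => (j : ℕ) < k)).image s)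
    (hgreedy : ∀ k : Fin N, ∀ e : E, e ∉ S k →
      f (insert e (S k)) - f (S k) ≤ f (insert (s k) (S k)) - f (S k))
    (Sstar : Finset E) (hstar : Sstar.card ≤ N) :
    (1 - (1 - 1 / (N : ℝ)) ^ N) * f Sstar ≤ f (S N) := by
  classical
  have hNpos : (0:ℝ) < N := by exact_mod_cast Nat.lt_of_lt_of_le Nat.zero_lt_one hN
  have hc : (0:ℝ) ≤ 1 - 1 / N := by
    rw [sub_nonneg]
    rw [div_le_one hNpos]
    exact_mod_cast hN
  -- submodular expansion lemma
  have expand : ∀ (A C : Finset E), Disjoint A C →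
      f (A ∪ C) ≤ f A + ∑ e ∈ C, (f (insert e A) - f A) := by
    intro A C
    induction C using Finset.induction_on with
    | empty => simp
    | @insert e C he ih =>
      intro hdisj
      have hdisj' : Disjoint A C := hdisj.mono_right (Finset.subset_insert _ _)
      have heA : e ∉ A := by
        intro h
        exact (Finset.disjoint_left.mp hdisj) h (Finset.mem_insert_self _ _)
      have heAC : e ∉ A ∪ C := by
        simp [heA, he]
      have hsub' := hsub A (A ∪ C) (Finset.subset_union_left) e heAC
      have ih' := ih hdisj'
      have hrw : A ∪ insert e C = insert e (A ∪ C) := by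
        ext x; simp [or_comm, or_assoc, or_left_comm]
      rw [hrw, Finset.sum_insert he]
      linarith
  have hS0 : S 0 = ∅ := by
    rw [hS]; simp
  have hstep : ∀ n (hn : n < N), S (n + 1) = insert (s ⟨n, hn⟩) (S n) := by
    intro n hn
    rw [hS, hS]
    ext e
    simp only [Finset.mem_image, Finset.mem_insert, Finset.mem_filter, Finset.mem_univ, true_and]
    constructor
    · rintro ⟨j, hj, rfl⟩
      rcases Nat.lt_succ_iff_lt_or_eq.mp hj with h | h
      · exact Or.inr ⟨j, h, rfl⟩
      · left; congr 1; exact Fin.ext h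
    · rintro (rfl | ⟨j, hj, rfl⟩)
      · exact ⟨⟨n, hn⟩, Nat.lt_succ_self _, rfl⟩
      · exact ⟨j, Nat.lt_succ_of_lt hj, rfl⟩
  have key : ∀ n (hn : n < N), f Sstar - f (S n) ≤ N * (f (S (n + 1)) - f (S n)) := by
    intro n hn
    have gain_nonneg : 0 ≤ f (S (n + 1)) - f (S n) := by
      rw [hstep n hn]
      have := hmono (S n) (insert (s ⟨n, hn⟩) (S n)) (Finset.subset_insert _ _)
      linarith
    have h1 : f Sstar ≤ f (S n ∪ (Sstar \ S n)) := by
      apply hmono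
      intro x hx
      by_cases hxs : x ∈ S n
      · exact Finset.mem_union_left _ hxs
      · exact Finset.mem_union_right _ (Finset.mem_sdiff.mpr ⟨hx, hxs⟩)
    have h2 := expand (S n) (Sstar \ S n) Finset.disjoint_sdiff
    have h3 : ∑ e ∈ Sstar \ S n, (f (insert e (S n)) - f (S n)) ≤
        ((Sstar \ S n).card : ℝ) * (f (S (n + 1)) - f (S n)) := by
      rw [hstep n hn]
      have := Finset.sum_le_card_nsmul (Sstar \ S n)
        (fun e => f (insert e (S n)) - f (S n))
        (f (insert (s ⟨n, hn⟩) (S n)) - f (S n))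
        (fun e he => hgreedy ⟨n, hn⟩ e (Finset.mem_sdiff.mp he).2)
      simpa [nsmul_eq_mul] using this
    have hcardle : ((Sstar \ S n).card : ℝ) ≤ (N : ℝ) := by
      have : (Sstar \ S n).card ≤ Sstar.card := Finset.card_le_card (Finset.sdiff_subset)
      exact_mod_cast le_trans this hstar
    have h4 : ((Sstar \ S n).card : ℝ) * (f (S (n + 1)) - f (S n)) ≤
        (N : ℝ) * (f (S (n + 1)) - f (S n)) :=
      mul_le_mul_of_nonneg_right hcardle gain_nonneg
    linarith
  have hfs_nonneg : 0 ≤ f Sstar := by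
    rw [← hf0]; exact hmono ∅ Sstar (Finset.empty_subset _)
  have main : ∀ n, n ≤ N → f Sstar - f (S n) ≤ (1 - 1 / (N : ℝ)) ^ n * f Sstar := by
    intro n
    induction n with
    | zero => intro _; rw [hS0, hf0]; simp
    | succ n ih =>
      intro hn1
      have hn : n < N := hn1
      have ih' := ih (le_of_lt hn)
      have hkey := key n hn
      have hdiv : (1 / (N : ℝ)) * (f Sstar - f (S n)) ≤ f (S (n + 1)) - f (S n) := by
        rw [one_div, inv_mul_le_iff₀ hNpos]
        exact hkey
      have step : f Sstar - f (S (n + 1)) ≤ (1 - 1 / (N : ℝ)) * (f Sstar - f (S n)) := by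
        have hexp : (1 - 1 / (N : ℝ)) * (f Sstar - f (S n)) =
            (f Sstar - f (S n)) - (1 / (N : ℝ)) * (f Sstar - f (S n)) := by ring
        linarith
      calc f Sstar - f (S (n + 1)) ≤ (1 - 1 / (N : ℝ)) * (f Sstar - f (S n)) := step
        _ ≤ (1 - 1 / (N : ℝ)) * ((1 - 1 / (N : ℝ)) ^ n * f Sstar) :=
            mul_le_mul_of_nonneg_left ih' hc
        _ = (1 - 1 / (N : ℝ)) ^ (n + 1) * f Sstar := by ring
  have := main N le_rfl
  nlinarith [this]
end

section
/- (Total curvature greedy performance bound.) Let f be a monotone submodular set function on a finite ground set E with f(∅) = 0 and f({e}) > 0 for every e ∈ E, let N ≥ 1, let s_1,…,s_N be a greedy sequence with S^G = {s_1,…,s_N}, and let S* be any subset of E with |S*| ≤ N. Let α_T = max_{e∈E} (1 − Δf(e | E∖{e}) / Δf(e|∅)) be the total curvature of f, and suppose α_T > 0. Then f(S^G) ≥ (1/α_T) · (1 − ((N − α_T)/N)^N) · f(S*). -/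
open scoped Classical

/-!
Let `ρ k` be the gain of the `k`-th greedy step and `α` the total curvature. Curvature bounds
`f (S* ∪ Sᵗ)` from below by `f S*` plus `1 - α` times the singleton values of `Sᵗ \ S*`, each of
which dominates the corresponding greedy gain; submodularity and the greedy choice bound it from
above by `f Sᵗ + |S* \ Sᵗ| ρ t`. This gives, for every `t < N`, a linear inequality between `f S*`,
the gains up to step `t`, and `ρ t`, in which the steps that picked elements of `S*` play a
special role. Following Conforti and Cornuéjols, a backward induction on the potential
`f S* - α f Sᵗ - (1 - α) (gains of those steps before t)` turns these inequalities into
`f S* - α f S^G ≤ (1 - α / N) ^ N f S*`; if the potential ever becomes negative, then already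
`f S^G ≥ f S*`.
-/

open Finset

def DiminishingReturns {E : Type*} [DecidableEq E] (f : Finset E → ℝ) : Prop :=
  ∀ ⦃A B : Finset E⦄, A ⊆ B → ∀ ⦃e⦄, e ∉ B → f (insert e B) - f B ≤ f (insert e A) - f A

def prefixGain {E : Type*} [DecidableEq E] (f : Finset E → ℝ) (σ : ℕ → E) (k : ℕ) : ℝ :=
  f (insert (σ k) ((range k).image σ)) - f ((range k).image σ)

namespace DiminishingReturns

variable {E : Type*} [DecidableEq E] {f : Finset E → ℝ}

theorem le_add_sum_marginal (hf : DiminishingReturns f) {A D : Finset E} (hAD : Disjoint A D) :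
    f (A ∪ D) ≤ f A + ∑ e ∈ D, (f (insert e A) - f A) := by
  induction D using Finset.induction_on with
  | empty => simp
  | insert d D hd ih =>
    rw [disjoint_insert_right] at hAD
    have := hf (subset_union_left : A ⊆ A ∪ D) (e := d) (by simp [hAD.1, hd])
    rw [union_insert, sum_insert hd]
    linarith [ih hAD.2]

theorem sum_marginal_univ_le [Fintype E] (hf : DiminishingReturns f) {B D : Finset E}
    (hBD : Disjoint B D) :
    ∑ e ∈ D, (f univ - f (univ.erase e)) ≤ f (B ∪ D) - f B := by
  induction D using Finset.induction_on with
  | empty => simp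
  | insert d D hd ih =>
    rw [disjoint_insert_right] at hBD
    have := hf (subset_erase.2 ⟨subset_univ (B ∪ D), by simp [hBD.1, hd]⟩) (notMem_erase d univ)
    rw [insert_erase (mem_univ d)] at this
    rw [union_insert, sum_insert hd]
    linarith [ih hBD.2]

theorem add_mul_sum_sdiff_le [Fintype E] (hf : DiminishingReturns f) {α g : ℝ}
    (hcurv : ∀ e, (1 - α) * f {e} ≤ f univ - f (univ.erase e)) {A O : Finset E}
    (hg : ∀ e ∉ A, f (insert e A) - f A ≤ g) :
    f O + (1 - α) * ∑ e ∈ A \ O, f {e} ≤ f A + #(O \ A) * g := by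
  have hremove := hf.sum_marginal_univ_le (disjoint_sdiff (s := O) (t := A))
  have hadd := hf.le_add_sum_marginal (disjoint_sdiff (s := A) (t := O))
  have hgain : ∑ e ∈ O \ A, (f (insert e A) - f A) ≤ #(O \ A) * g := by
    simpa using sum_le_card_nsmul _ _ g fun e he => hg e (mem_sdiff.1 he).2
  have hcurv' : (1 - α) * ∑ e ∈ A \ O, f {e} ≤ ∑ e ∈ A \ O, (f univ - f (univ.erase e)) := by
    rw [mul_sum]; exact sum_le_sum fun e _ => hcurv e
  rw [union_sdiff_self_eq_union] at hremove hadd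
  rw [union_comm] at hremove
  linarith

end DiminishingReturns

section Prefix

variable {E : Type*} [DecidableEq E] {f : Finset E → ℝ} {σ : ℕ → E}

theorem apply_image_range_eq_add_sum_prefixGain (f : Finset E → ℝ) (σ : ℕ → E) (t : ℕ) :
    f ((range t).image σ) = f ∅ + ∑ k ∈ range t, prefixGain f σ k := by
  have := sum_range_sub (fun k => f ((range k).image σ)) t
  simp only [range_add_one, image_insert, range_zero, image_empty] at this
  unfold prefixGain
  linarith

theorem prefixGain_nonneg (hmono : Monotone f) (σ : ℕ → E) (k : ℕ) : 0 ≤ prefixGain f σ k :=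
  sub_nonneg.2 (hmono (subset_insert _ _))

theorem notMem_image_range_of_injOn {t k : ℕ} (hinj : Set.InjOn σ (range t)) (hk : k < t) :
    σ k ∉ (range k).image σ := by
  simp only [mem_image, mem_range, not_exists, not_and]
  intro j hj hjk
  have := hinj (mem_coe.2 (mem_range.2 (by omega))) (mem_coe.2 (mem_range.2 hk)) hjk
  omega

theorem DiminishingReturns.sum_filter_prefixGain_le (hf : DiminishingReturns f) (hf0 : f ∅ = 0)
    {t : ℕ} (hinj : Set.InjOn σ (range t)) (O : Finset E) :
    ∑ k ∈ (range t).filter (fun k => σ k ∉ O), prefixGain f σ k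
      ≤ ∑ e ∈ (range t).image σ \ O, f {e} := by
  rw [sdiff_eq_filter, filter_image, sum_image (hinj.mono (coe_subset.2 (filter_subset _ _)))]
  refine sum_le_sum fun k hk => ?_
  have hkt : k < t := by simpa using (mem_filter.1 hk).1
  have := hf (empty_subset _) (notMem_image_range_of_injOn hinj hkt)
  rwa [hf0, sub_zero] at this

theorem card_sdiff_image_range_add_card_filter {t : ℕ} (hinj : Set.InjOn σ (range t))
    (O : Finset E) :
    #(O \ (range t).image σ) + #((range t).filter (fun k => σ k ∈ O)) = #O := by
  rw [← card_sdiff_add_card_inter O ((range t).image σ), inter_comm, ← filter_mem_eq_inter,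
    filter_image, card_image_of_injOn (hinj.mono (coe_subset.2 (filter_subset _ _)))]

theorem DiminishingReturns.add_mul_sum_filter_prefixGain_le [Fintype E]
    (hf : DiminishingReturns f) (hmono : Monotone f) (hf0 : f ∅ = 0) {α : ℝ} (hα1 : α ≤ 1)
    (hcurv : ∀ e, (1 - α) * f {e} ≤ f univ - f (univ.erase e)) {t N : ℕ}
    (hinj : Set.InjOn σ (range t))
    (hgreedy : ∀ e ∉ (range t).image σ,
      f (insert e ((range t).image σ)) - f ((range t).image σ) ≤ prefixGain f σ t)
    {O : Finset E} (hO : #O ≤ N) :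
    f O + (1 - α) * ∑ k ∈ (range t).filter (fun k => σ k ∉ O), prefixGain f σ k
      ≤ ∑ k ∈ range t, prefixGain f σ k
        + (N - #((range t).filter (fun k => σ k ∈ O))) * prefixGain f σ t := by
  have hstep := hf.add_mul_sum_sdiff_le hcurv (O := O) hgreedy
  have hgains := mul_le_mul_of_nonneg_left (hf.sum_filter_prefixGain_le hf0 hinj O)
    (sub_nonneg.2 hα1)
  have hcard : (#(O \ (range t).image σ) : ℝ) ≤ N - #((range t).filter (fun k => σ k ∈ O)) := by
    have := card_sdiff_image_range_add_card_filter hinj O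
    rw [le_sub_iff_add_le]
    exact_mod_cast this ▸ hO
  have hlast := mul_le_mul_of_nonneg_right hcard (prefixGain_nonneg hmono σ t)
  rw [apply_image_range_eq_add_sum_prefixGain f σ t, hf0, zero_add] at hstep
  linarith

end Prefix

section Curvature

variable {E : Type*} [DecidableEq E] [Fintype E] {f : Finset E → ℝ}

theorem one_sub_mul_le_of_curvature_le {α : ℝ} {e : E} (hpos : 0 < f {e})
    (h : 1 - (f (insert e (univ.erase e)) - f (univ.erase e)) / f {e} ≤ α) :
    (1 - α) * f {e} ≤ f univ - f (univ.erase e) := by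
  rw [insert_erase (mem_univ e)] at h
  rw [← le_div_iff₀ hpos]
  linarith

theorem curvature_le_one (hmono : Monotone f) {e : E} (hpos : 0 < f {e}) :
    1 - (f (insert e (univ.erase e)) - f (univ.erase e)) / f {e} ≤ 1 :=
  sub_le_self _ (div_nonneg (sub_nonneg.2 (hmono (subset_insert _ _))) hpos.le)

end Curvature

theorem exists_injOn_range_image_range_eq {E : Type*} [DecidableEq E] {N : ℕ} (hN : 1 ≤ N)
    {s : Fin N → E} (hs : Function.Injective s) :
    ∃ σ : ℕ → E, Set.InjOn σ (range N) ∧ (∀ j : Fin N, σ j = s j) ∧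
      ∀ t ≤ N, (univ.filter (fun j : Fin N => (j : ℕ) < t)).image s = (range t).image σ := by
  set σ : ℕ → E := fun k => s ⟨min k (N - 1), by omega⟩
  have hσ (j : Fin N) : σ j = s j := by
    simp only [σ, Nat.min_eq_left (Nat.le_sub_one_of_lt j.2)]
  refine ⟨σ, fun a ha b hb hab => ?_, hσ, fun t ht => ?_⟩
  · have := @hs ⟨a, by simpa using ha⟩ ⟨b, by simpa using hb⟩ (by simpa [← hσ] using hab)
    simpa using this
  · ext e
    simp only [mem_image, mem_filter, mem_univ, true_and, mem_range]
    constructor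
    · rintro ⟨j, hj, rfl⟩
      exact ⟨j, hj, hσ j⟩
    · rintro ⟨k, hk, rfl⟩
      exact ⟨⟨k, by omega⟩, hk, (hσ ⟨k, by omega⟩).symm⟩

section Inequalities

variable {a P : ℝ}

theorem one_sub_le_one_sub_div_pow (ha0 : 0 ≤ a) (ha1 : a ≤ 1) {d : ℕ} (hd : (d : ℝ) ≤ P) :
    1 - a ≤ (1 - a / P) ^ d := by
  rcases d.eq_zero_or_pos with rfl | hd0
  · simpa using ha0
  have hP : 1 ≤ P := le_trans (by exact_mod_cast hd0) hd
  have hdiv : d * (a / P) ≤ a := by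
    calc d * (a / P) ≤ P * (a / P) := by gcongr
      _ = a := mul_div_cancel₀ a (by positivity)
  have hbern := one_add_mul_sub_le_pow (a := 1 - a / P)
    (by linarith [div_le_one_of_le₀ (ha1.trans hP) (by positivity)]) d
  linarith

theorem one_sub_div_pow_succ_le (ha0 : 0 ≤ a) (ha1 : a ≤ 1) {n : ℕ} (hn : (n : ℝ) + 2 ≤ P) :
    (1 - a / P) ^ (n + 1) ≤ (1 - a / (P - 1)) ^ n := by
  have hP1 : 0 < P - 1 := by linarith [n.cast_nonneg (α := ℝ)]
  have hP0 : 0 < P := by linarith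
  set x := 1 - a / P with hx
  set y := 1 - a / (P - 1) with hy
  have hx0 : 0 < x := by
    have : a / P < 1 := (div_lt_one hP0).2 (by linarith)
    linarith
  have hy0 : 0 ≤ y := by
    have : a / (P - 1) ≤ 1 := (div_le_one hP1).2 (by linarith)
    linarith
  -- Bernoulli for `y / x` reduces the claim to `n (x - y) ≤ x (1 - x)`, i.e. `n P ≤ (P - a) (P - 1)`.
  have hgap : n * (x - y) ≤ x * (1 - x) := by
    have e1 : n * (x - y) = a * n / (P * (P - 1)) := by
      rw [hx, hy]; field_simp; ring
    have e2 : x * (1 - x) = a * (P - a) / P ^ 2 := by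
      rw [hx]; field_simp; ring
    rw [e1, e2, div_le_div_iff₀ (by positivity) (by positivity)]
    have hnP : n * P ≤ (P - a) * (P - 1) := by nlinarith
    calc a * n * P ^ 2 = a * (n * P) * P := by ring
      _ ≤ a * ((P - a) * (P - 1)) * P := by gcongr
      _ = a * (P - a) * (P * (P - 1)) := by ring
  have hkey : x ≤ (y / x) ^ n := by
    refine le_trans ?_ (one_add_mul_sub_le_pow (by linarith [div_nonneg hy0 hx0.le]) n)
    have : n * (x - y) / x ≤ 1 - x := by rw [div_le_iff₀ hx0]; linarith
    have e : 1 + n * (y / x - 1) = 1 - n * (x - y) / x := by field_simp; ring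
    linarith
  calc x ^ (n + 1) = x ^ n * x := pow_succ x n
    _ ≤ x ^ n * (y / x) ^ n := by gcongr
    _ = y ^ n := by rw [← mul_pow, mul_div_cancel₀ y hx0.ne']

theorem one_sub_div_add_one_sub_one_div_mul_pow_le (ha0 : 0 ≤ a) (ha1 : a ≤ 1) {d : ℕ}
    (hd : (d : ℝ) + 1 ≤ P) :
    (1 - a) / P + (1 - 1 / P) * (1 - a / (P - 1)) ^ d ≤ (1 - a / P) ^ (d + 1) := by
  induction d with
  | zero => exact le_of_eq (by ring)
  | succ d ih =>
    push_cast at hd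
    have hP : 0 < P := by linarith [d.cast_nonneg (α := ℝ)]
    have hP1 : P - 1 ≠ 0 := by linarith [d.cast_nonneg (α := ℝ)]
    have hstep : (1 - 1 / P) * (1 - a / (P - 1)) = 1 - 1 / P - a / P := by
      field_simp
    have hG := one_sub_div_pow_succ_le ha0 ha1 (n := d) (P := P) (by linarith)
    calc (1 - a) / P + (1 - 1 / P) * (1 - a / (P - 1)) ^ (d + 1)
        = (1 - a) / P + (1 - 1 / P) * (1 - a / (P - 1)) ^ d - a / P * (1 - a / (P - 1)) ^ d := by
          rw [pow_succ, mul_comm _ (1 - a / (P - 1)), ← mul_assoc, hstep]; ring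
      _ ≤ (1 - a / P) ^ (d + 1) - a / P * (1 - a / P) ^ (d + 1) := by
          gcongr
          exact ih (by linarith)
      _ = (1 - a / P) ^ (d + 1 + 1) := by ring

variable {α x ρ : ℝ} {d : ℕ}

theorem pow_mul_sub_add_le_pow_succ_mul (hα0 : 0 ≤ α) (hα1 : α ≤ 1) (hd : (d : ℝ) + 1 ≤ P)
    (hx0 : 0 ≤ x) (hx : x ≤ P * ρ) :
    (1 - α / (P - 1)) ^ d * (x - ρ) + (1 - α) * ρ ≤ (1 - α / P) ^ (d + 1) * x := by
  have hP : 0 < P := by linarith [d.cast_nonneg (α := ℝ)]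
  set c := (1 - α / (P - 1)) ^ d
  have hc : 1 - α ≤ c := one_sub_le_one_sub_div_pow hα0 hα1 (by linarith)
  have hρ : x / P ≤ ρ := by rwa [div_le_iff₀ hP, mul_comm]
  have h1 := mul_le_mul_of_nonneg_left hρ (sub_nonneg.2 hc)
  have h2 := mul_le_mul_of_nonneg_left
    (one_sub_div_add_one_sub_one_div_mul_pow_le hα0 hα1 hd) hx0
  have e : x * ((1 - α) / P + (1 - 1 / P) * c) = c * x - (c - (1 - α)) * (x / P) := by ring
  linarith

theorem pow_mul_sub_mul_le_pow_succ_mul (hα0 : 0 ≤ α) (hP : 0 < P) (hαP : α ≤ P)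
    (hx : x ≤ P * ρ) :
    (1 - α / P) ^ d * (x - α * ρ) ≤ (1 - α / P) ^ (d + 1) * x := by
  have hρ : α * (x / P) ≤ α * ρ := by
    gcongr
    rwa [div_le_iff₀ hP, mul_comm]
  have hc : 0 ≤ 1 - α / P := sub_nonneg.2 ((div_le_one hP).2 hαP)
  rw [pow_succ, mul_assoc]
  gcongr
  linarith [show α / P * x = α * (x / P) by ring]

end Inequalities

theorem sub_mul_le_pow_mul_of_potential {N : ℕ} {α : ℝ} (hα0 : 0 ≤ α) (hα1 : α ≤ 1)
    {y R P ρ : ℕ → ℝ} (hy : ∀ t < N, y (t + 1) = y t - α * ρ t)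
    (hRP : ∀ t < N, (R (t + 1) = R t + ρ t ∧ P (t + 1) = P t - 1) ∨
      (R (t + 1) = R t ∧ P (t + 1) = P t))
    (hP : ∀ t < N, (N : ℝ) ≤ P t + t)
    (hx0 : ∀ t < N, 0 ≤ y t - (1 - α) * R t)
    (hx : ∀ t < N, y t - (1 - α) * R t ≤ P t * ρ t) {t d : ℕ} (htd : t + d = N) :
    y N - (1 - α) * R t ≤ (1 - α / P t) ^ d * (y t - (1 - α) * R t) := by
  induction d generalizing t with
  | zero =>
    obtain rfl : t = N := htd
    simp
  | succ d ih =>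
    have ht : t < N := by omega
    have hPt : (d : ℝ) + 1 ≤ P t := by
      have := hP t ht
      rw [← htd] at this
      push_cast at this
      linarith
    have ih := ih (t := t + 1) (by omega)
    rw [hy t ht] at ih
    have hP0 : 0 < P t := by linarith [d.cast_nonneg (α := ℝ)]
    rcases hRP t ht with ⟨hR, hP'⟩ | ⟨hR, hP'⟩
    · rw [hR, hP', show y t - α * ρ t - (1 - α) * (R t + ρ t)
        = y t - (1 - α) * R t - ρ t by ring] at ih
      linarith [pow_mul_sub_add_le_pow_succ_mul hα0 hα1 hPt (hx0 t ht) (hx t ht)]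
    · rw [hR, hP', show y t - α * ρ t - (1 - α) * R t
        = y t - (1 - α) * R t - α * ρ t by ring] at ih
      exact ih.trans (pow_mul_sub_mul_le_pow_succ_mul hα0 hP0 (by linarith) (hx t ht))

theorem one_sub_one_sub_div_pow_mul_le {N : ℕ} {α fO : ℝ} (hα0 : 0 ≤ α) (hα1 : α ≤ 1)
    (hfO : 0 ≤ fO) {ρ : ℕ → ℝ} (hρ : ∀ k, 0 ≤ ρ k) (p : ℕ → Prop) [DecidablePred p]
    (hstep : ∀ t < N, fO + (1 - α) * ∑ k ∈ (range t).filter (fun k => ¬ p k), ρ k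
      ≤ ∑ k ∈ range t, ρ k + (N - #((range t).filter p)) * ρ t) :
    (1 - (1 - α / N) ^ N) * fO ≤ α * ∑ k ∈ range N, ρ k := by
  set F : ℕ → ℝ := fun t => ∑ k ∈ range t, ρ k with hF
  set R : ℕ → ℝ := fun t => ∑ k ∈ (range t).filter p, ρ k with hR
  set m : ℕ → ℝ := fun t => (#((range t).filter p) : ℝ) with hm
  have hFR (t : ℕ) : R t + ∑ k ∈ (range t).filter (fun k => ¬ p k), ρ k = F t :=
    sum_filter_add_sum_filter_not _ _ _
  have hRF (t : ℕ) : R t ≤ F t :=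
    sum_le_sum_of_subset_of_nonneg (filter_subset _ _) fun k _ _ => hρ k
  by_cases hpos : ∀ t < N, 0 ≤ fO - α * F t - (1 - α) * R t
  · have hF1 (t : ℕ) : F (t + 1) = F t + ρ t := sum_range_succ ρ t
    have hRm (t : ℕ) : (R (t + 1) = R t + ρ t ∧ (N - m (t + 1)) = (N - m t) - 1) ∨
        (R (t + 1) = R t ∧ (N - m (t + 1)) = N - m t) := by
      by_cases h : p t
      · left
        simp only [hR, hm, range_add_one, filter_insert, h, if_true,
          sum_insert (fun h' => notMem_range_self (mem_filter.1 h').1),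
          card_insert_of_notMem (fun h' => notMem_range_self (mem_filter.1 h').1)]
        push_cast
        constructor <;> ring
      · right; simp [hR, hm, range_add_one, filter_insert, h]
    have hbound := sub_mul_le_pow_mul_of_potential (N := N) (y := fun t => fO - α * F t) (R := R)
      (P := fun t => N - m t) (ρ := ρ) hα0 hα1 (fun t _ => by simp only [hF1]; ring)
      (fun t _ => hRm t) (fun t _ => ?_) (fun t ht => hpos t ht) (fun t ht => ?_) (zero_add N)
    · simp only [hF, hR, range_zero, filter_empty, sum_empty, mul_zero, sub_zero, hm, card_empty,
        CharP.cast_eq_zero] at hbound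
      linarith
    · have hmt : m t ≤ t := by
        simpa [hm] using (card_filter_le (range t) p)
      linarith
    · have h := hstep t ht
      have hsplit := hFR t
      simp only [hF, hR, hm] at h hsplit ⊢
      linear_combination h + (α - 1) * hsplit
  · push Not at hpos
    obtain ⟨t, ht, hneg⟩ := hpos
    have hFt : F t ≤ F N :=
      sum_le_sum_of_subset_of_nonneg (range_subset_range.2 ht.le) fun k _ _ => hρ k
    have hfO : fO ≤ F N := by
      nlinarith [mul_le_mul_of_nonneg_left (hRF t) (sub_nonneg.2 hα1)]
    have hcoef : 1 - (1 - α / N) ^ N ≤ α := by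
      linarith [one_sub_le_one_sub_div_pow hα0 hα1 (le_refl (N : ℝ))]
    calc (1 - (1 - α / N) ^ N) * fO ≤ α * fO := by gcongr
      _ ≤ α * F N := by gcongr

theorem greedy_total_curvature_bound_general
    {E : Type*} [Fintype E] [DecidableEq E]
    (N : ℕ) (hN : 1 ≤ N)
    (f : Finset E → ℝ)
    (hf0 : f ∅ = 0)
    (hfpos : ∀ e : E, 0 < f {e})
    (hmono : ∀ A B : Finset E, A ⊆ B → f A ≤ f B)
    (hsub : ∀ A B : Finset E, A ⊆ B → ∀ e ∉ B,
      f (insert e B) - f B ≤ f (insert e A) - f A)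
    (s : Fin N → E) (hs : Function.Injective s)
    (S : ℕ → Finset E)
    (hS : ∀ k : ℕ, S k = (Finset.univ.filter (fun j : Fin N => (j : ℕ) < k)).image s)
    (hgreedy : ∀ k : Fin N, ∀ e : E, e ∉ S k →
      f (insert e (S k)) - f (S k) ≤ f (insert (s k) (S k)) - f (S k))
    (Sstar : Finset E) (hstar : Sstar.card ≤ N)
    (αT : ℝ)
    (hαT : IsGreatest (Set.range fun e : E =>
      1 - (f (insert e ((Finset.univ : Finset E).erase e))
            - f ((Finset.univ : Finset E).erase e)) / f {e}) αT)
    (hαTpos : 0 < αT) :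
    (1 / αT) * (1 - ((N - αT) / N) ^ N) * f Sstar ≤ f (S N) := by
  obtain ⟨σ, hinj, hσ, himage⟩ := exists_injOn_range_image_range_eq hN hs
  have hSσ (t : ℕ) (ht : t ≤ N) : S t = (range t).image σ := (hS t).trans (himage t ht)
  have hf : DiminishingReturns f := fun A B hAB e he => hsub A B hAB e he
  have hmono' : Monotone f := fun A B hAB => hmono A B hAB
  have hα1 : αT ≤ 1 := by
    obtain ⟨e, rfl⟩ := hαT.1
    exact curvature_le_one hmono' (hfpos e)
  have hcurv (e : E) : (1 - αT) * f {e} ≤ f univ - f (univ.erase e) :=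
    one_sub_mul_le_of_curvature_le (hfpos e) (hαT.2 ⟨e, rfl⟩)
  have hstep (t : ℕ) (ht : t < N) := hf.add_mul_sum_filter_prefixGain_le hmono' hf0 hα1 hcurv
    (hinj.mono (coe_subset.2 (range_subset_range.2 ht.le)))
    (fun e he => by
      have := hgreedy ⟨t, ht⟩ e
      simp only [← hσ, hSσ t ht.le] at this
      exact this he) hstar
  have key := one_sub_one_sub_div_pow_mul_le hαTpos.le hα1 (hf0 ▸ hmono' (empty_subset Sstar))
    (prefixGain_nonneg hmono' σ) (fun k => σ k ∈ Sstar) hstep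
  rw [hSσ N le_rfl, apply_image_range_eq_add_sum_prefixGain f σ N, hf0, zero_add, sub_div,
    div_self (by positivity), mul_assoc, one_div, inv_mul_le_iff₀ hαTpos]
  exact key

/-- Total-curvature greedy performance bound:
`f(S^G) ≥ (1/α_T)(1 − ((N − α_T)/N)^N) · f(S*)`. -/
theorem greedy_total_curvature_bound
    {E : Type*} [Fintype E] [DecidableEq E]
    (N : ℕ) (hN : 1 ≤ N) (hcard : N ≤ Fintype.card E)
    (f : Finset E → ℝ)
    (hf0 : f ∅ = 0)
    (hfpos : ∀ e : E, 0 < f {e})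
    (hmono : ∀ A B : Finset E, A ⊆ B → f A ≤ f B)
    (hsub : ∀ A B : Finset E, A ⊆ B → ∀ e ∉ B,
      f (insert e B) - f B ≤ f (insert e A) - f A)
    (s : Fin N → E) (hs : Function.Injective s)
    (S : ℕ → Finset E)
    (hS : ∀ k : ℕ, S k = (Finset.univ.filter (fun j : Fin N => (j : ℕ) < k)).image s)
    (hgreedy : ∀ k : Fin N, ∀ e : E, e ∉ S k →
      f (insert e (S k)) - f (S k) ≤ f (insert (s k) (S k)) - f (S k))
    (Sstar : Finset E) (hstar : Sstar.card ≤ N)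
    (αT : ℝ)
    (hαT : IsGreatest (Set.range fun e : E =>
      1 - (f (insert e ((Finset.univ : Finset E).erase e))
            - f ((Finset.univ : Finset E).erase e)) / f {e}) αT)
    (hαTpos : 0 < αT) :
    (1 / αT) * (1 - ((N - αT) / N) ^ N) * f Sstar ≤ f (S N) :=
  greedy_total_curvature_bound_general N hN f hf0 hfpos hmono hsub s hs S hS hgreedy Sstar hstar αT
    hαT hαTpos
end

section
/- (Greedy curvature performance bound.) Let f be a monotone submodular set function on a finite ground set E with f(∅) = 0 and f({e}) > 0 for every e ∈ E, let N ≥ 1, let s_1,…,s_N be a greedy sequence with intermediate sets S^0 = ∅ ⊆ S^1 ⊆ … ⊆ S^N = S^G, and let S* be any subset of E with |S*| ≤ N. Let α_G = max_{0 ≤ i ≤ N−1} max_{e ∈ E∖S^i} (1 − Δf(e | S^i) / Δf(e|∅)) be the greedy curvature. Then f(S^G) ≥ (1 − α_G·(1 − 1/N)) · f(S*). -/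
/-!
Since `|S^k| ≤ k`, Hall's theorem enumerates `S*` as `e_0, …, e_{m-1}` with `e_k ∉ S^k`.
Greedy choice and the definition of `α_G` then give
`Δf(s_k | S^k) ≥ Δf(e_k | S^k) ≥ (1 - α_G) f {e_k}`, while the first step gains
`max_e f {e}`, which dominates `f {e_0}` and, by subadditivity, also `f S* / N`. Summing the
gains of the first `m` steps yields
`f S^G ≥ α_G max_e f {e} + (1 - α_G) ∑_{e ∈ S*} f {e} ≥ (1 - α_G (1 - 1/N)) f S*`.
-/

open scoped Classical

open Finset

theorem Finset.exists_fin_equiv_forall_notMem {E : Type*} (S : ℕ → Finset E)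
    (hS : ∀ k, #(S k) ≤ k) (T : Finset E) {m : ℕ} (hm : #T = m) :
    ∃ ψ : Fin m ≃ T, ∀ k : Fin m, (ψ k : E) ∉ S k := by
  let t : T → Finset (Fin m) := fun x => univ.filter fun k => (x : E) ∉ S k
  have hall : ∀ U : Finset T, #U ≤ #(U.biUnion t) := by
    intro U
    have hUm : #U ≤ m := hm ▸ (card_le_univ U).trans_eq (Fintype.card_coe T)
    -- a set of the chain with index below `#U` is too small to contain `U`
    have hmaps : Set.MapsTo (Fin.castLE hUm) (univ : Finset (Fin #U)) (U.biUnion t) := by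
      intro k _
      by_contra hk
      have hsub : U.map (Function.Embedding.subtype _) ⊆ S k := by
        intro x hx
        obtain ⟨y, hy, rfl⟩ := mem_map.mp hx
        by_contra hyk
        exact hk (mem_biUnion.mpr ⟨y, hy, by simpa [t] using hyk⟩)
      have hcard := (card_le_card hsub).trans (hS k)
      rw [card_map] at hcard
      exact absurd k.isLt hcard.not_gt
    simpa using card_le_card_of_injOn _ hmaps (Fin.castLE_injective hUm).injOn
  obtain ⟨φ, hφinj, hφt⟩ := (all_card_le_biUnion_card_iff_exists_injective t).mp hall
  have hφbij : Function.Bijective φ :=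
    (Fintype.bijective_iff_injective_and_card φ).mpr ⟨hφinj, by simp [hm]⟩
  refine ⟨(Equiv.ofBijective φ hφbij).symm, fun k => ?_⟩
  simpa only [t, mem_filter, mem_univ, true_and, Equiv.ofBijective_apply_symm_apply] using
    hφt ((Equiv.ofBijective φ hφbij).symm k)

theorem le_sum_singleton_of_submodular {E : Type*} [DecidableEq E] {f : Finset E → ℝ}
    (hf0 : f ∅ = 0)
    (hsub : ∀ A B : Finset E, A ⊆ B → ∀ e ∉ B,
      f (insert e B) - f B ≤ f (insert e A) - f A)
    (A : Finset E) : f A ≤ ∑ e ∈ A, f {e} := by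
  induction A using Finset.induction_on with
  | empty => simp [hf0]
  | insert e A he ih =>
    have := hsub ∅ A (empty_subset A) e he
    rw [sum_insert he]
    simp only [insert_empty, hf0, sub_zero] at this
    linarith

def greedyCurvatureValues {E : Type*} [DecidableEq E] (f : Finset E → ℝ) (S : ℕ → Finset E)
    (N : ℕ) : Set ℝ :=
  {v | ∃ i : Fin N, ∃ e : E, e ∉ S i ∧ v = 1 - (f (insert e (S i)) - f (S i)) / f {e}}

section Curvature

variable {E : Type*} [DecidableEq E] {f : Finset E → ℝ} {S : ℕ → Finset E} {N : ℕ}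

theorem le_one_of_mem_greedyCurvatureValues (hfpos : ∀ e, 0 < f {e})
    (hmono : ∀ A B : Finset E, A ⊆ B → f A ≤ f B) {v : ℝ}
    (hv : v ∈ greedyCurvatureValues f S N) : v ≤ 1 := by
  obtain ⟨i, e, -, rfl⟩ := hv
  have := div_nonneg (sub_nonneg.mpr (hmono _ _ (subset_insert e (S i)))) (hfpos e).le
  linarith

theorem zero_mem_greedyCurvatureValues (hf0 : f ∅ = 0) (hS0 : S 0 = ∅) (hN : 0 < N) {e : E}
    (he : 0 < f {e}) : 0 ∈ greedyCurvatureValues f S N :=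
  ⟨⟨0, hN⟩, e, by simp [hS0], by simp [hS0, hf0, he.ne']⟩

end Curvature

namespace GreedyChain

variable {E : Type*} [DecidableEq E] {N : ℕ} {s : Fin N → E} {S : ℕ → Finset E}
  (hS : ∀ k : ℕ, S k = (univ.filter (fun j : Fin N => (j : ℕ) < k)).image s)
include hS

theorem set_zero : S 0 = ∅ := by
  simp [hS]

theorem card_set_le (k : ℕ) : #(S k) ≤ k := by
  rw [hS]
  refine card_image_le.trans ?_
  simpa using card_le_card_of_injOn (fun j : Fin N => (j : ℕ)) (t := range k)
    (fun j hj => by simpa using hj) Fin.val_injective.injOn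

theorem set_mono : Monotone S := by
  intro a b hab
  rw [hS, hS]
  exact image_subset_image (monotone_filter_right _ fun _ _ hj => hj.trans_le hab)

theorem set_succ {k : ℕ} (hk : k < N) : S (k + 1) = insert (s ⟨k, hk⟩) (S k) := by
  rw [hS, hS, ← image_insert]
  congr 1
  ext j
  simp [Fin.ext_iff]
  omega

variable {f : Finset E → ℝ}
  (hgreedy : ∀ k : Fin N, ∀ e : E, e ∉ S k →
    f (insert e (S k)) - f (S k) ≤ f (insert (s k) (S k)) - f (S k))
include hgreedy

theorem marginal_le_gain {k : ℕ} (hk : k < N) {e : E} (he : e ∉ S k) :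
    f (insert e (S k)) - f (S k) ≤ f (S (k + 1)) - f (S k) := by
  rw [set_succ hS hk]
  exact hgreedy ⟨k, hk⟩ e he

theorem singleton_le_set_one (hf0 : f ∅ = 0) (hN : 0 < N) (e : E) : f {e} ≤ f (S 1) := by
  have := marginal_le_gain hS hgreedy hN (e := e) (by simp [set_zero hS])
  simpa [set_zero hS, hf0] using this

theorem one_sub_mul_le_gain (hfpos : ∀ e, 0 < f {e}) {α : ℝ}
    (hα : α ∈ upperBounds (greedyCurvatureValues f S N)) {k : ℕ} (hk : k < N) {e : E}
    (he : e ∉ S k) : (1 - α) * f {e} ≤ f (S (k + 1)) - f (S k) := by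
  have hcurv : 1 - (f (insert e (S k)) - f (S k)) / f {e} ≤ α :=
    hα ⟨⟨k, hk⟩, e, he, rfl⟩
  have hratio : 1 - α ≤ (f (insert e (S k)) - f (S k)) / f {e} := by linarith
  exact ((le_div_iff₀ (hfpos e)).mp hratio).trans (marginal_le_gain hS hgreedy hk he)

theorem add_one_sub_mul_sum_singleton_le (hf0 : f ∅ = 0) (hfpos : ∀ e, 0 < f {e})
    (hmono : ∀ A B : Finset E, A ⊆ B → f A ≤ f B) {α : ℝ}
    (hα : α ∈ upperBounds (greedyCurvatureValues f S N)) (hα1 : α ≤ 1) {T : Finset E}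
    (hT : T.Nonempty) (hTN : #T ≤ N) :
    α * f (S 1) + (1 - α) * ∑ e ∈ T, f {e} ≤ f (S N) := by
  obtain ⟨n, hn⟩ : ∃ n, #T = n + 1 := Nat.exists_eq_succ_of_ne_zero hT.card_pos.ne'
  obtain ⟨ψ, hψ⟩ := exists_fin_equiv_forall_notMem S (card_set_le hS) T hn
  have hnN : n + 1 ≤ N := hn ▸ hTN
  have hsumT : ∑ e ∈ T, f {e} = ∑ k : Fin (n + 1), f {(ψ k : E)} := by
    rw [← sum_coe_sort T, ← Equiv.sum_comp ψ]
  have htelescope : f (S (n + 1)) = ∑ k : Fin (n + 1), (f (S (k + 1)) - f (S k)) := by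
    rw [Fin.sum_univ_eq_sum_range (fun k => f (S (k + 1)) - f (S k)),
      sum_range_sub (fun k => f (S k)), set_zero hS, hf0, sub_zero]
  -- the first greedy step gains the largest singleton value, so it pays for the `α` term
  have hfirst : α * f (S 1) + (1 - α) * f {(ψ 0 : E)} ≤ f (S 1) - f (S 0) := by
    have := mul_le_mul_of_nonneg_left
      (singleton_le_set_one hS hgreedy hf0 (by omega) (ψ 0 : E)) (sub_nonneg.mpr hα1)
    rw [set_zero hS, hf0]
    linarith
  have hrest (k : Fin n) :
      (1 - α) * f {(ψ k.succ : E)} ≤ f (S (k.succ + 1)) - f (S k.succ) :=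
    one_sub_mul_le_gain hS hgreedy hfpos hα (k.succ.isLt.trans_le hnN) (hψ k.succ)
  calc α * f (S 1) + (1 - α) * ∑ e ∈ T, f {e}
      = (α * f (S 1) + (1 - α) * f {(ψ 0 : E)})
          + ∑ k : Fin n, (1 - α) * f {(ψ k.succ : E)} := by
        rw [hsumT, Fin.sum_univ_succ, mul_add, mul_sum, add_assoc]
    _ ≤ (f (S 1) - f (S 0)) + ∑ k : Fin n, (f (S (k.succ + 1)) - f (S k.succ)) :=
        add_le_add hfirst (sum_le_sum fun k _ => hrest k)
    _ = f (S (n + 1)) := by rw [htelescope, Fin.sum_univ_succ]; rfl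
    _ ≤ f (S N) := hmono _ _ (set_mono hS hnN)

end GreedyChain

theorem greedy_greedy_curvature_bound_general
    {E : Type*} [Fintype E] [DecidableEq E]
    (N : ℕ)
    (f : Finset E → ℝ)
    (hf0 : f ∅ = 0)
    (hfpos : ∀ e : E, 0 < f {e})
    (hmono : ∀ A B : Finset E, A ⊆ B → f A ≤ f B)
    (hsub : ∀ A B : Finset E, A ⊆ B → ∀ e ∉ B,
      f (insert e B) - f B ≤ f (insert e A) - f A)
    (s : Fin N → E)
    (S : ℕ → Finset E)
    (hS : ∀ k : ℕ, S k = (Finset.univ.filter (fun j : Fin N => (j : ℕ) < k)).image s)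
    (hgreedy : ∀ k : Fin N, ∀ e : E, e ∉ S k →
      f (insert e (S k)) - f (S k) ≤ f (insert (s k) (S k)) - f (S k))
    (Sstar : Finset E) (hstar : Sstar.card ≤ N)
    (αG : ℝ)
    (hαG : IsGreatest {v : ℝ | ∃ i : Fin N, ∃ e : E, e ∉ S i ∧
      v = 1 - (f (insert e (S i)) - f (S i)) / f {e}} αG) :
    (1 - αG * (1 - 1 / (N : ℝ))) * f Sstar ≤ f (S N) := by
  rcases Sstar.eq_empty_or_nonempty with rfl | hne
  · simpa [hf0] using hmono ∅ (S N) (empty_subset _)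
  have hN : 0 < N := hne.card_pos.trans_le hstar
  have hα0 : 0 ≤ αG := hαG.2 <|
    zero_mem_greedyCurvatureValues hf0 (GreedyChain.set_zero hS) hN (hfpos (s ⟨0, hN⟩))
  have hα1 : αG ≤ 1 := le_one_of_mem_greedyCurvatureValues hfpos hmono hαG.1
  have hgains : αG * f (S 1) + (1 - αG) * ∑ e ∈ Sstar, f {e} ≤ f (S N) :=
    GreedyChain.add_one_sub_mul_sum_singleton_le hS hgreedy hf0 hfpos hmono hαG.2 hα1 hne hstar
  have hsingle (e : E) : f {e} ≤ f (S 1) := GreedyChain.singleton_le_set_one hS hgreedy hf0 hN e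
  have hsum : ∑ e ∈ Sstar, f {e} ≤ N * f (S 1) := by
    calc ∑ e ∈ Sstar, f {e} ≤ #Sstar • f (S 1) :=
          sum_le_card_nsmul _ _ _ fun e _ => hsingle e
      _ ≤ N * f (S 1) := by
        rw [nsmul_eq_mul]
        gcongr
        exact (hfpos (s ⟨0, hN⟩)).le.trans (hsingle _)
  have hle_sum := le_sum_singleton_of_submodular hf0 hsub Sstar
  have hdiv : f Sstar / N ≤ f (S 1) := (div_le_iff₀ (by positivity)).mpr (by linarith)
  calc (1 - αG * (1 - 1 / (N : ℝ))) * f Sstar = (1 - αG) * f Sstar + αG * (f Sstar / N) := by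
        ring
    _ ≤ (1 - αG) * ∑ e ∈ Sstar, f {e} + αG * f (S 1) := by gcongr
    _ ≤ f (S N) := by linarith

/-- Greedy-curvature performance bound: `f(S^G) ≥ (1 − α_G(1 − 1/N)) · f(S*)`. -/
theorem greedy_greedy_curvature_bound
    {E : Type*} [Fintype E] [DecidableEq E]
    (N : ℕ) (hN : 1 ≤ N) (hcard : N ≤ Fintype.card E)
    (f : Finset E → ℝ)
    (hf0 : f ∅ = 0)
    (hfpos : ∀ e : E, 0 < f {e})
    (hmono : ∀ A B : Finset E, A ⊆ B → f A ≤ f B)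
    (hsub : ∀ A B : Finset E, A ⊆ B → ∀ e ∉ B,
      f (insert e B) - f B ≤ f (insert e A) - f A)
    (s : Fin N → E) (hs : Function.Injective s)
    (S : ℕ → Finset E)
    (hS : ∀ k : ℕ, S k = (Finset.univ.filter (fun j : Fin N => (j : ℕ) < k)).image s)
    (hgreedy : ∀ k : Fin N, ∀ e : E, e ∉ S k →
      f (insert e (S k)) - f (S k) ≤ f (insert (s k) (S k)) - f (S k))
    (Sstar : Finset E) (hstar : Sstar.card ≤ N)
    (αG : ℝ)
    (hαG : IsGreatest {v : ℝ | ∃ i : Fin N, ∃ e : E, e ∉ S i ∧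
      v = 1 - (f (insert e (S i)) - f (S i)) / f {e}} αG) :
    (1 - αG * (1 - 1 / (N : ℝ))) * f Sstar ≤ f (S N) :=
  greedy_greedy_curvature_bound_general N f hf0 hfpos hmono hsub s S hS hgreedy Sstar hstar αG hαG
end
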